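/- Let G be a simple graph with edge set E ≠ ∅ and let D(G) be the double subdivision of all edges of G. Then D(G) can be edge-covered by |E| cochordal subgraphs; that is, cochord(D(G)) ≤ |E|. -/

import Mathlib

/-- `G` contains an induced cycle on `n` vertices. -/
def HasInducedCycle {V : Type*} (G : SimpleGraph V) (n : ℕ) : Prop :=
  ∃ f : ZMod n → V, Function.Injective f ∧
    ∀ i j : ZMod n, G.Adj (f i) (f j) ↔ (j = i + 1 ∨ i = j + 1)

/-- A graph is chordal if it contains no induced cycle of length at least `4`. -/
def Chordal {V : Type*} (G : SimpleGraph V) : Prop :=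
  ∀ n : ℕ, 4 ≤ n → ¬ HasInducedCycle G n

/-- A graph is cochordal if its complement is chordal. -/
def Cochordal {V : Type*} (G : SimpleGraph V) : Prop := Chordal Gᶜ

/-- The cochordal cover number of `G`: the least `n` such that `G` has `n` cochordal
subgraphs whose edge sets cover all edges of `G`. -/
noncomputable def cochordNumber {V : Type*} (G : SimpleGraph V) : ℕ :=
  sInf {n : ℕ | ∃ H : Fin n → G.Subgraph,
    (∀ i, Cochordal (H i).coe) ∧ (⋃ i, (H i).edgeSet) = G.edgeSet}

/-- The double subdivision `D(G)` of `G`: every edge `uv` is replaced by a path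
`u – m(u,v) – m(v,u) – v` through two new vertices. -/
def doubleSubdivision {V : Type*} (G : SimpleGraph V) :
    SimpleGraph (V ⊕ {p : V × V // G.Adj p.1 p.2}) :=
  SimpleGraph.fromRel fun a b =>
    match a, b with
    | Sum.inl u, Sum.inr p => p.1.1 = u
    | Sum.inr p, Sum.inr q => p.1.1 = q.1.2 ∧ p.1.2 = q.1.1
    | _, _ => False

/-!
For an edge `uv` of `G`, the ends `u`, `v` and the two subdivision vertices of `uv` induce the
path `P₄` in `D(G)`. Its complement has only three edges, while an induced `n`-cycle has `n`
distinct edges, so the complement is chordal. These `|E|` induced paths cover `E(D(G))`: every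
edge of `D(G)` has a subdivision vertex as an end, and both ends lie on that vertex's path.
-/

open SimpleGraph

theorem HasInducedCycle.le_encard_edgeSet {V : Type*} {G : SimpleGraph V} {n : ℕ}
    (hn : 3 ≤ n) (h : HasInducedCycle G n) : (n : ℕ∞) ≤ G.edgeSet.encard := by
  obtain ⟨f, hf, hadj⟩ := h
  have : NeZero n := ⟨by omega⟩
  have htwo : (2 : ZMod n) ≠ 0 := by
    exact_mod_cast (ZMod.natCast_eq_zero_iff 2 n).not.mpr (Nat.not_dvd_of_pos_of_lt two_pos hn)
  let cycleEdge : ZMod n → G.edgeSet := fun i => ⟨s(f i, f (i + 1)), (hadj _ _).2 (Or.inl rfl)⟩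
  have hinj : Function.Injective cycleEdge := by
    intro i j hij
    rcases Sym2.eq_iff.1 (congrArg Subtype.val hij) with ⟨hij, -⟩ | ⟨hi, hj⟩
    · exact hf hij
    · exact absurd (by linear_combination hf hj - hf hi) htwo
  simpa using ENat.card_le_card_of_injective hinj

theorem Chordal.of_encard_edgeSet_le_three {V : Type*} {G : SimpleGraph V}
    (h : G.edgeSet.encard ≤ 3) : Chordal G := by
  intro n hn hG
  have : (n : ℕ∞) ≤ 3 := (hG.le_encard_edgeSet (by omega)).trans h
  have : n ≤ 3 := by exact_mod_cast this
  omega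

theorem cochordNumber_le_of_iUnion_edgeSet_eq {W ι : Type*} [Finite ι] {H : SimpleGraph W}
    (F : ι → H.Subgraph) (hF : ∀ i, Cochordal (F i).coe)
    (hcover : ⋃ i, (F i).edgeSet = H.edgeSet) :
    cochordNumber H ≤ Nat.card ι := by
  let eqv := Finite.equivFin ι
  refine Nat.sInf_le ⟨F ∘ eqv.symm, fun _ => hF _, ?_⟩
  rw [← hcover]
  exact eqv.symm.surjective.iUnion_comp fun i => (F i).edgeSet

section

variable {V : Type*} {G : SimpleGraph V}

def subdividedEdgeVerts (G : SimpleGraph V) (e : Sym2 V) :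
    Set (V ⊕ {p : V × V // G.Adj p.1 p.2}) :=
  {x | Sum.elim (· ∈ e) (fun p => s(p.1.1, p.1.2) = e) x}

@[simp] theorem inl_mem_subdividedEdgeVerts {w : V} {e : Sym2 V} :
    Sum.inl w ∈ subdividedEdgeVerts G e ↔ w ∈ e := Iff.rfl

@[simp] theorem inr_mem_subdividedEdgeVerts {p : {p : V × V // G.Adj p.1 p.2}} {e : Sym2 V} :
    Sum.inr p ∈ subdividedEdgeVerts G e ↔ s(p.1.1, p.1.2) = e := Iff.rfl

theorem mem_subdividedEdgeVerts_mk {u v : V} (h : G.Adj u v)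
    {x : V ⊕ {p : V × V // G.Adj p.1 p.2}} :
    x ∈ subdividedEdgeVerts G s(u, v) ↔
      x = .inl u ∨ x = .inl v ∨ x = .inr ⟨(u, v), h⟩ ∨ x = .inr ⟨(v, u), h.symm⟩ := by
  rcases x with w | ⟨⟨a, b⟩, hab⟩ <;> simp [or_comm]

theorem encard_edgeSet_compl_induce_subdividedEdgeVerts_le {u v : V} (h : G.Adj u v) :
    ((⊤ : (doubleSubdivision G).Subgraph).induce
      (subdividedEdgeVerts G s(u, v))).coeᶜ.edgeSet.encard ≤ 3 := by
  -- The induced subgraph is the path `u – (u, v) – (v, u) – v`; these are its three non-edges.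
  have hmaps : Set.MapsTo (Sym2.map Subtype.val)
      ((⊤ : (doubleSubdivision G).Subgraph).induce (subdividedEdgeVerts G s(u, v))).coeᶜ.edgeSet
      {s(.inl u, .inl v), s(.inl u, .inr ⟨(v, u), h.symm⟩), s(.inl v, .inr ⟨(u, v), h⟩)} := by
    intro e he
    induction e using Sym2.ind with | _ x y => ?_
    obtain ⟨x, hx⟩ := x
    obtain ⟨y, hy⟩ := y
    rw [mem_edgeSet, compl_adj, Subgraph.coe_adj, Subgraph.induce_adj, Subgraph.top_adj, Ne,
      Subtype.mk.injEq] at he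
    obtain ⟨hne, hnadj⟩ : x ≠ y ∧ ¬ (doubleSubdivision G).Adj x y :=
      ⟨he.1, fun hadj => he.2 ⟨hx, hy, hadj⟩⟩
    rw [Sym2.map_mk]
    clear he
    replace hx := (mem_subdividedEdgeVerts_mk h).1 hx
    replace hy := (mem_subdividedEdgeVerts_mk h).1 hy
    rcases hx with rfl | rfl | rfl | rfl <;> rcases hy with rfl | rfl | rfl | rfl <;>
      simp_all [doubleSubdivision, h.ne, h.ne.symm]
  calc _ ≤ _ :=
        Set.encard_le_encard_of_injOn hmaps (Sym2.map.injective Subtype.val_injective).injOn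
    _ ≤ 3 := by grw [Set.encard_insert_le, Set.encard_insert_le, Set.encard_singleton]; norm_num

theorem cochordal_induce_subdividedEdgeVerts {e : Sym2 V} (he : e ∈ G.edgeSet) :
    Cochordal ((⊤ : (doubleSubdivision G).Subgraph).induce (subdividedEdgeVerts G e)).coe := by
  induction e using Sym2.ind with | _ u v => ?_
  exact Chordal.of_encard_edgeSet_le_three (encard_edgeSet_compl_induce_subdividedEdgeVerts_le he)

theorem exists_mem_subdividedEdgeVerts_of_adj {x y : V ⊕ {p : V × V // G.Adj p.1 p.2}}
    (hxy : (doubleSubdivision G).Adj x y) :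
    ∃ e ∈ G.edgeSet, x ∈ subdividedEdgeVerts G e ∧ y ∈ subdividedEdgeVerts G e := by
  rcases x with u | p <;> rcases y with w | q
  · simp [doubleSubdivision] at hxy
  · exact ⟨s(q.1.1, q.1.2), q.2, by simp_all [doubleSubdivision]⟩
  · exact ⟨s(p.1.1, p.1.2), p.2, by simp_all [doubleSubdivision]⟩
  · refine ⟨s(p.1.1, p.1.2), p.2, rfl, ?_⟩
    simp only [doubleSubdivision, fromRel_adj] at hxy
    rcases hxy.2 with ⟨h1, h2⟩ | ⟨h1, h2⟩ <;> simp [h1, h2, Sym2.eq_swap]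

theorem edgeSet_doubleSubdivision_subset_iUnion :
    (doubleSubdivision G).edgeSet ⊆
      ⋃ e : G.edgeSet, ((⊤ : (doubleSubdivision G).Subgraph).induce
        (subdividedEdgeVerts G e)).edgeSet := by
  intro ε hε
  induction ε using Sym2.ind with | _ x y => ?_
  obtain ⟨e, he, hx, hy⟩ := exists_mem_subdividedEdgeVerts_of_adj hε
  exact Set.mem_iUnion.2 ⟨⟨e, he⟩, hx, hy, hε⟩

end

theorem stmt_11_general {V : Type*} [Fintype V] (G : SimpleGraph V) :
    cochordNumber (doubleSubdivision G) ≤ G.edgeSet.ncard := by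
  rw [← Nat.card_coe_set_eq]
  refine cochordNumber_le_of_iUnion_edgeSet_eq _
    (fun e => cochordal_induce_subdividedEdgeVerts e.2) ?_
  exact (Set.iUnion_subset fun _ => Subgraph.edgeSet_subset _).antisymm
    edgeSet_doubleSubdivision_subset_iUnion

/-- If `G` has at least one edge, then `D(G)` can be edge-covered by `|E(G)|` cochordal
subgraphs: `cochord(D(G)) ≤ |E(G)|`. -/
theorem stmt_11 {V : Type*} [Fintype V] (G : SimpleGraph V) (hE : G.edgeSet.Nonempty) :
    cochordNumber (doubleSubdivision G) ≤ G.edgeSet.ncard :=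
  stmt_11_general G
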